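/- Under the uniform visiting policy $\pi(z) = r(z)/r(1)$, the stationary generating function is $r(z) = \frac{\lambda\, r(1)\,(\varphi(z)-1)}{\alpha(1-\theta(z)) + \mu\, r(1)\,(1 - z^{-1})}$ with $r(1) = \frac{\alpha\theta'(1)+\lambda\varphi'(1)}{\mu}$, and the denominator $\alpha(1-\theta(z)) + \mu r(1)(1-z^{-1})$ does not vanish for any real $z\in(0,1)$. -/
import Mathlib

open Filter Topology Finset

private lemma aux_gs_nonneg {z : ℝ} (hz : 0 ≤ z) (i : ℕ) :
    0 ≤ ∑ k ∈ Finset.range i, z ^ k :=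
  Finset.sum_nonneg fun k _ => pow_nonneg hz k

private lemma aux_gs_le {z : ℝ} (h0 : 0 ≤ z) (h1 : z ≤ 1) (i : ℕ) :
    ∑ k ∈ Finset.range i, z ^ k ≤ (i : ℝ) := by
  calc ∑ k ∈ Finset.range i, z ^ k ≤ ∑ k ∈ Finset.range i, (1 : ℝ) :=
        Finset.sum_le_sum fun k _ => pow_le_one₀ h0 h1
    _ = (i : ℝ) := by simp

private lemma aux_summable_pow {f : ℕ → ℝ} (hf : ∀ i, 0 ≤ f i) (hs : Summable f)
    {z : ℝ} (hz : z ∈ Set.Ioo (0:ℝ) 1) : Summable (fun i => f i * z ^ i) := by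
  apply hs.of_nonneg_of_le (fun i => mul_nonneg (hf i) (pow_nonneg hz.1.le i))
  intro i
  have h1 : z ^ i ≤ 1 := pow_le_one₀ hz.1.le hz.2.le
  nlinarith [hf i, pow_nonneg hz.1.le i]

private lemma aux_summable_geom {f : ℕ → ℝ} (hf : ∀ i, 0 ≤ f i)
    (hm : Summable (fun i : ℕ => (i:ℝ) * f i)) {z : ℝ} (hz : z ∈ Set.Ioo (0:ℝ) 1) :
    Summable (fun i => f i * ∑ k ∈ Finset.range i, z ^ k) := by
  apply hm.of_nonneg_of_le
  · intro i; exact mul_nonneg (hf i) (aux_gs_nonneg hz.1.le i)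
  · intro i
    have h2 := aux_gs_le hz.1.le hz.2.le i
    nlinarith [hf i, aux_gs_nonneg hz.1.le i]

private lemma aux_tendsto_tsum {f : ℕ → ℝ} (hf : ∀ i, 0 ≤ f i) (hs : Summable f) :
    Tendsto (fun z : ℝ => ∑' i, f i * z ^ i) (𝓝[Set.Ioo (0:ℝ) 1] 1) (𝓝 (∑' i, f i)) := by
  have h := tendsto_tsum_of_dominated_convergence (𝓕 := 𝓝[Set.Ioo (0:ℝ) 1] 1)
    (f := fun (z:ℝ) (i:ℕ) => f i * z ^ i) (g := fun i => f i) (bound := f) hs ?_ ?_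
  · exact h
  · intro k
    have h1 : Tendsto (fun z : ℝ => f k * z ^ k) (𝓝 1) (𝓝 (f k * 1 ^ k)) :=
      Continuous.tendsto (by continuity) 1
    simpa using h1.mono_left nhdsWithin_le_nhds
  · filter_upwards [eventually_mem_nhdsWithin] with z hz
    intro k
    rw [Real.norm_eq_abs, abs_of_nonneg (mul_nonneg (hf k) (pow_nonneg hz.1.le k))]
    nlinarith [hf k, pow_le_one₀ hz.1.le hz.2.le (n := k), pow_nonneg hz.1.le k]

private lemma aux_tendsto_geom {f : ℕ → ℝ} (hf : ∀ i, 0 ≤ f i)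
    (hm : Summable fun i : ℕ => (i:ℝ) * f i) :
    Tendsto (fun z : ℝ => ∑' i, f i * ∑ k ∈ Finset.range i, z ^ k)
      (𝓝[Set.Ioo (0:ℝ) 1] 1) (𝓝 (∑' i : ℕ, (i:ℝ) * f i)) := by
  have h := tendsto_tsum_of_dominated_convergence (𝓕 := 𝓝[Set.Ioo (0:ℝ) 1] 1)
    (f := fun (z:ℝ) (i:ℕ) => f i * ∑ k ∈ Finset.range i, z ^ k)
    (g := fun i => (i:ℝ) * f i) (bound := fun i => (i:ℝ) * f i) hm ?_ ?_
  · exact h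
  · intro k
    have h1 : Tendsto (fun z : ℝ => f k * ∑ j ∈ Finset.range k, z ^ j) (𝓝 1)
        (𝓝 (f k * ∑ j ∈ Finset.range k, (1:ℝ) ^ j)) := Continuous.tendsto (by continuity) 1
    simpa [mul_comm] using h1.mono_left nhdsWithin_le_nhds
  · filter_upwards [eventually_mem_nhdsWithin] with z hz
    intro k
    rw [Real.norm_eq_abs, abs_of_nonneg (mul_nonneg (hf k) (aux_gs_nonneg hz.1.le k))]
    nlinarith [hf k, aux_gs_le hz.1.le hz.2.le k, aux_gs_nonneg hz.1.le k]

private lemma aux_one_sub {f : ℕ → ℝ} (hf : ∀ i, 0 ≤ f i) (hs : Summable f)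
    {z : ℝ} (hz : z ∈ Set.Ioo (0:ℝ) 1) :
    (∑' i, f i) - ∑' i, f i * z ^ i
      = (1 - z) * ∑' i, f i * ∑ k ∈ Finset.range i, z ^ k := by
  rw [← Summable.tsum_sub hs (aux_summable_pow hf hs hz), ← tsum_mul_left]
  apply tsum_congr
  intro i
  have h : (1 - z) * (∑ k ∈ Finset.range i, z ^ k) = 1 - z ^ i := by
    linear_combination -(geom_sum_mul z i)
  calc f i - f i * z ^ i = f i * (1 - z ^ i) := by ring
    _ = f i * ((1 - z) * ∑ k ∈ Finset.range i, z ^ k) := by rw [h]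
    _ = (1 - z) * (f i * ∑ k ∈ Finset.range i, z ^ k) := by ring

/-- Under the uniform visiting policy `π(z) = r(z)/r(1)`, the stationary generating function
is `r(z) = λ r(1)(φ(z)-1)/(α(1-θ(z)) + μ r(1)(1-z⁻¹))`, with
`r(1) = (αθ'(1)+λφ'(1))/μ`, and the denominator does not vanish on `(0,1)`. -/
theorem stmt17 (α lam μ : ℝ) (hα : 0 < α) (hlam : 0 < lam) (hμ : 0 < μ)
    (θ φ : ℕ → ℝ) (hθ0 : θ 0 = 0) (hφ0 : φ 0 = 0)
    (hθ : ∀ i, 0 ≤ θ i) (hφ : ∀ i, 0 ≤ φ i)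
    (hθs : HasSum θ 1) (hφs : HasSum φ 1)
    (hθm : Summable fun i : ℕ => (i : ℝ) * θ i)
    (hφm : Summable fun i : ℕ => (i : ℝ) * φ i)
    (r : ℕ → ℝ) (hr0 : r 0 = 0) (hrpos : ∀ i, 0 ≤ r i) (hrs : Summable r)
    (hR : 0 < ∑' i : ℕ, r i)
    (heq : ∀ z ∈ Set.Ioo (0 : ℝ) 1,
      α * (1 - ∑' i : ℕ, θ i * z ^ i) * ((∑' i : ℕ, r i * z ^ i) / (∑' i : ℕ, r i)) +
          μ * (1 - z⁻¹) * (∑' i : ℕ, r i * z ^ i) =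
        lam * (∑' i : ℕ, φ i * z ^ i) - μ * r 1) :
    (∑' i : ℕ, r i) =
      (α * (∑' i : ℕ, (i : ℝ) * θ i) + lam * (∑' i : ℕ, (i : ℝ) * φ i)) / μ ∧
    ∀ z ∈ Set.Ioo (0 : ℝ) 1,
      (α * (1 - ∑' i : ℕ, θ i * z ^ i) + μ * (∑' i : ℕ, r i) * (1 - z⁻¹)) ≠ 0 ∧
      (∑' i : ℕ, r i * z ^ i) =
        lam * (∑' i : ℕ, r i) * ((∑' i : ℕ, φ i * z ^ i) - 1) /
          (α * (1 - ∑' i : ℕ, θ i * z ^ i) + μ * (∑' i : ℕ, r i) * (1 - z⁻¹)) := by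
  have hθsum : Summable θ := hθs.summable
  have hφsum : Summable φ := hφs.summable
  have hθ1 : ∑' i, θ i = 1 := hθs.tsum_eq
  have hφ1 : ∑' i, φ i = 1 := hφs.tsum_eq
  set Sθ := ∑' i : ℕ, (i:ℝ) * θ i with hSθdef
  set Sφ := ∑' i : ℕ, (i:ℝ) * φ i with hSφdef
  set R := ∑' i : ℕ, r i with hRdef
  have hRne : R ≠ 0 := ne_of_gt hR
  set l := 𝓝[Set.Ioo (0:ℝ) 1] (1:ℝ) with hldef
  have hl : l.NeBot := by
    apply mem_closure_iff_nhdsWithin_neBot.mp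
    rw [closure_Ioo (by norm_num : (0:ℝ) ≠ 1)]
    constructor <;> norm_num
  have hSθ0 : 0 ≤ Sθ := tsum_nonneg fun i => mul_nonneg (Nat.cast_nonneg i) (hθ i)
  have hSφ1 : 1 ≤ Sφ := by
    rw [← hφ1]
    apply Summable.tsum_le_tsum _ hφsum hφm
    intro i
    rcases Nat.eq_zero_or_pos i with h | h
    · simp [h, hφ0]
    · have : (1:ℝ) ≤ (i:ℝ) := Nat.one_le_cast.mpr h
      nlinarith [hφ i]
  -- basic tendsto facts
  have hT1 : Tendsto (fun z : ℝ => ∑' i, θ i * z ^ i) l (𝓝 1) := by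
    have h := aux_tendsto_tsum hθ hθsum; rw [hθ1] at h; exact h
  have hP1 : Tendsto (fun z : ℝ => ∑' i, φ i * z ^ i) l (𝓝 1) := by
    have h := aux_tendsto_tsum hφ hφsum; rw [hφ1] at h; exact h
  have hRf : Tendsto (fun z : ℝ => ∑' i, r i * z ^ i) l (𝓝 R) := aux_tendsto_tsum hrpos hrs
  have hid : Tendsto (fun z : ℝ => z) l (𝓝 1) := tendsto_id.mono_left nhdsWithin_le_nhds
  have hinv : Tendsto (fun z : ℝ => z⁻¹) l (𝓝 1) := by
    have h1 : Tendsto (fun z : ℝ => z⁻¹) (𝓝 1) (𝓝 (1:ℝ)⁻¹) :=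
      (continuousAt_inv₀ one_ne_zero).tendsto
    simpa using h1.mono_left nhdsWithin_le_nhds
  have hTg : Tendsto (fun z : ℝ => ∑' i, θ i * ∑ k ∈ Finset.range i, z ^ k) l (𝓝 Sθ) :=
    aux_tendsto_geom hθ hθm
  have hPg : Tendsto (fun z : ℝ => ∑' i, φ i * ∑ k ∈ Finset.range i, z ^ k) l (𝓝 Sφ) :=
    aux_tendsto_geom hφ hφm
  -- first limit: μ r 1 = lam
  have hLHS : Tendsto (fun z : ℝ =>
      α * (1 - ∑' i, θ i * z ^ i) * ((∑' i, r i * z ^ i) / R)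
        + μ * (1 - z⁻¹) * (∑' i, r i * z ^ i)) l
      (𝓝 (α * (1 - 1) * (R / R) + μ * (1 - 1) * R)) :=
    ((tendsto_const_nhds.mul (tendsto_const_nhds.sub hT1)).mul (hRf.div_const R)).add
      ((tendsto_const_nhds.mul (tendsto_const_nhds.sub hinv)).mul hRf)
  have hRHS : Tendsto (fun z : ℝ => lam * (∑' i, φ i * z ^ i) - μ * r 1) l
      (𝓝 (lam * 1 - μ * r 1)) := (tendsto_const_nhds.mul hP1).sub tendsto_const_nhds
  have heqev : (fun z : ℝ =>
      α * (1 - ∑' i, θ i * z ^ i) * ((∑' i, r i * z ^ i) / R)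
        + μ * (1 - z⁻¹) * (∑' i, r i * z ^ i)) =ᶠ[l]
      fun z : ℝ => lam * (∑' i, φ i * z ^ i) - μ * r 1 := by
    filter_upwards [eventually_mem_nhdsWithin] with z hz
    exact heq z hz
  have h0 : α * (1 - 1) * (R / R) + μ * (1 - 1) * R = lam * 1 - μ * r 1 :=
    tendsto_nhds_unique (hLHS.congr' heqev) hRHS
  have hr1 : μ * r 1 = lam := by ring_nf at h0; linarith
  -- cleared functional equation on (0,1)
  have hE : ∀ z ∈ Set.Ioo (0:ℝ) 1,
      α * (∑' i, θ i * ∑ k ∈ Finset.range i, z ^ k) * (∑' i, r i * z ^ i) * z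
        - μ * (∑' i, r i * z ^ i) * R
        = -(lam * (∑' i, φ i * ∑ k ∈ Finset.range i, z ^ k) * R * z) := by
    intro z hz
    have hz0 : z ≠ 0 := ne_of_gt hz.1
    have hz1 : (1:ℝ) - z ≠ 0 := ne_of_gt (by linarith [hz.2])
    have h := heq z hz
    have h1 : 1 - ∑' i, θ i * z ^ i
        = (1 - z) * ∑' i, θ i * ∑ k ∈ Finset.range i, z ^ k := by
      rw [← aux_one_sub hθ hθsum hz, hθ1]
    have h2 : 1 - ∑' i, φ i * z ^ i
        = (1 - z) * ∑' i, φ i * ∑ k ∈ Finset.range i, z ^ k := by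
      rw [← aux_one_sub hφ hφsum hz, hφ1]
    have e1 : (∑' i, r i * z ^ i) / R * R = ∑' i, r i * z ^ i :=
      div_mul_cancel₀ _ hRne
    have e2 : z⁻¹ * z = 1 := inv_mul_cancel₀ hz0
    apply mul_left_cancel₀ hz1
    linear_combination (R * z) * h
      - (α * (1 - ∑' i, θ i * z ^ i) * z) * e1
      + (μ * (∑' i, r i * z ^ i) * R) * e2
      - (α * (∑' i, r i * z ^ i) * z) * h1
      - (lam * R * z) * h2
      - (R * z) * hr1
  -- second limit: μ R = α Sθ + lam Sφ
  have hL2 : Tendsto (fun z : ℝ =>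
      α * (∑' i, θ i * ∑ k ∈ Finset.range i, z ^ k) * (∑' i, r i * z ^ i) * z
        - μ * (∑' i, r i * z ^ i) * R) l
      (𝓝 (α * Sθ * R * 1 - μ * R * R)) :=
    (((tendsto_const_nhds.mul hTg).mul hRf).mul hid).sub
      ((tendsto_const_nhds.mul hRf).mul_const R)
  have hR2 : Tendsto (fun z : ℝ =>
      -(lam * (∑' i, φ i * ∑ k ∈ Finset.range i, z ^ k) * R * z)) l
      (𝓝 (-(lam * Sφ * R * 1))) :=
    ((((tendsto_const_nhds.mul hPg).mul_const R).mul hid)).neg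
  have hEev : (fun z : ℝ =>
      α * (∑' i, θ i * ∑ k ∈ Finset.range i, z ^ k) * (∑' i, r i * z ^ i) * z
        - μ * (∑' i, r i * z ^ i) * R) =ᶠ[l]
      fun z : ℝ => -(lam * (∑' i, φ i * ∑ k ∈ Finset.range i, z ^ k) * R * z) := by
    filter_upwards [eventually_mem_nhdsWithin] with z hz
    exact hE z hz
  have h02 : α * Sθ * R * 1 - μ * R * R = -(lam * Sφ * R * 1) :=
    tendsto_nhds_unique (hL2.congr' hEev) hR2
  have hμR : μ * R = α * Sθ + lam * Sφ := by
    apply mul_left_cancel₀ hRne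
    linear_combination -h02
  constructor
  · rw [eq_div_iff (ne_of_gt hμ)]
    linarith [hμR]
  · intro z hz
    have hz0 : z ≠ 0 := ne_of_gt hz.1
    have hz1 : (1:ℝ) - z ≠ 0 := ne_of_gt (by linarith [hz.2])
    have h := heq z hz
    have h1 : 1 - ∑' i, θ i * z ^ i
        = (1 - z) * ∑' i, θ i * ∑ k ∈ Finset.range i, z ^ k := by
      rw [← aux_one_sub hθ hθsum hz, hθ1]
    have hTgle : (∑' i, θ i * ∑ k ∈ Finset.range i, z ^ k) ≤ Sθ := by
      apply Summable.tsum_le_tsum _ (aux_summable_geom hθ hθm hz) hθm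
      intro i
      nlinarith [hθ i, aux_gs_le hz.1.le hz.2.le i, aux_gs_nonneg hz.1.le i]
    have hTgnn : 0 ≤ ∑' i, θ i * ∑ k ∈ Finset.range i, z ^ k :=
      tsum_nonneg fun i => mul_nonneg (hθ i) (aux_gs_nonneg hz.1.le i)
    have e2 : z⁻¹ * z = 1 := inv_mul_cancel₀ hz0
    -- denominator is negative
    have hDz : (α * (1 - ∑' i, θ i * z ^ i) + μ * R * (1 - z⁻¹)) * z
        = α * (1 - z) * (∑' i, θ i * ∑ k ∈ Finset.range i, z ^ k) * z - μ * R * (1 - z) := by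
      rw [h1]; linear_combination -(μ * R) * e2
    have hDzneg : (α * (1 - ∑' i, θ i * z ^ i) + μ * R * (1 - z⁻¹)) * z < 0 := by
      rw [hDz]
      set T := (∑' i, θ i * ∑ k ∈ Finset.range i, z ^ k) with hTdef
      have u : (0:ℝ) < 1 - z := by linarith [hz.2]
      have w1 : T * z ≤ Sθ := by
        nlinarith only [mul_nonneg hTgnn u.le, hTgle]
      have w2 : α * (1 - z) * (T * z) ≤ α * (1 - z) * Sθ :=
        mul_le_mul_of_nonneg_left w1 (by positivity)
      have w3 : 0 < lam * Sφ * (1 - z) :=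
        mul_pos (mul_pos hlam (lt_of_lt_of_le one_pos hSφ1)) u
      have w4 : (μ * R) * (1 - z) = (α * Sθ + lam * Sφ) * (1 - z) := by rw [hμR]
      nlinarith only [w2, w3, w4]
    have hDne : α * (1 - ∑' i, θ i * z ^ i) + μ * R * (1 - z⁻¹) ≠ 0 := by
      intro hc
      rw [hc, zero_mul] at hDzneg
      exact lt_irrefl 0 hDzneg
    refine ⟨hDne, ?_⟩
    rw [eq_div_iff hDne]
    have e1 : (∑' i, r i * z ^ i) / R * R = ∑' i, r i * z ^ i :=
      div_mul_cancel₀ _ hRne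
    linear_combination R * h - (α * (1 - ∑' i, θ i * z ^ i)) * e1 - R * hr1
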